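/- Let C_axis ∈ ℂ^{m×m×m} be the axis core tensor. If X ∈ ℂ^{m×m} is an invertible matrix with [[C_axis; X, X, X]] = C_axis, then X = ηI for some η ∈ ℂ with η³ = 1. That is, the stabilizer of C_axis under the congruence action by GL(m,ℂ) is trivial. -/
import Mathlib


open Matrix

/-- The axis core tensor over `ℂ`. -/
noncomputable def caxis (m : ℕ) : Fin m → Fin m → Fin m → ℂ := fun i j k =>
  if i < j ∧ j < k then 1
  else if (i < j ∧ j = k) ∨ (i = j ∧ j < k) then 1 / 2
  else if i = j ∧ j = k then 1 / 6
  else 0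

/-- The congruence action on an `m × m × m` tensor. -/
noncomputable def congrAct3 {m : ℕ} (C : Fin m → Fin m → Fin m → ℂ)
    (X : Matrix (Fin m) (Fin m) ℂ) : Fin m → Fin m → Fin m → ℂ :=
  fun α β γ => ∑ i, ∑ j, ∑ k, C i j k * X α i * X β j * X γ k

namespace AxisStab

variable {m : ℕ}

/-- prefix "mid-sum": (M u) j -/
noncomputable def av (u : Fin m → ℂ) (j : Fin m) : ℂ :=
  (∑ i, if i < j then u i else 0) + u j / 2

/-- suffix "mid-sum": (Mᵀ u) j -/
noncomputable def bv (u : Fin m → ℂ) (j : Fin m) : ℂ :=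
  (∑ i, if j < i then u i else 0) + u j / 2

noncomputable def sv (u : Fin m → ℂ) : ℂ := ∑ i, u i

noncomputable def F (u v w : Fin m → ℂ) : ℂ :=
  ∑ j, (av u j * v j * bv w j - u j * v j * w j / 12)

lemma sum_split (u : Fin m → ℂ) (j : Fin m) :
    sv u = (∑ i, if i < j then u i else 0) + u j + (∑ i, if j < i then u i else 0) := by
  have h : ∀ i : Fin m, u i = (if i < j then u i else 0) + (if i = j then u i else 0)
      + (if j < i then u i else 0) := by
    intro i
    rcases lt_trichotomy i j with h | h | h
    · simp [h, h.ne, not_lt.mpr h.le]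
    · simp [h, lt_irrefl]
    · simp [h, h.ne', not_lt.mpr h.le]
  have h2 : (∑ i, if i = j then u i else 0) = u j := by
    simpa using Finset.sum_ite_eq' Finset.univ j u
  calc sv u = ∑ i, ((if i < j then u i else 0) + (if i = j then u i else 0)
      + (if j < i then u i else 0)) := Finset.sum_congr rfl (fun i _ => h i)
    _ = (∑ i, if i < j then u i else 0) + (∑ i, if i = j then u i else 0)
      + (∑ i, if j < i then u i else 0) := by rw [Finset.sum_add_distrib, Finset.sum_add_distrib]
    _ = _ := by rw [h2]

lemma ab_lemma (u : Fin m → ℂ) (j : Fin m) : av u j + bv u j = sv u := by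
  rw [av, bv, sum_split u j]; ring

lemma caxis_formula (i j k : Fin m) :
    caxis m i j k = ((if i < j then (1:ℂ) else 0) + (if i = j then (1:ℂ) else 0)/2)
      * ((if j < k then (1:ℂ) else 0) + (if j = k then (1:ℂ) else 0)/2)
      - (if i = j then (1:ℂ) else 0) * (if j = k then (1:ℂ) else 0) / 12 := by
  simp only [caxis, Fin.lt_def, ← Fin.val_inj]
  split_ifs <;> first | omega | norm_num


lemma sum_ind_eq (u : Fin m → ℂ) (j : Fin m) :
    ∑ i, (if i = j then (1:ℂ) else 0) * u i = u j := by
  have h : ∀ i, (if i = j then (1:ℂ) else 0) * u i = if i = j then u i else 0 := by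
    intro i; split_ifs <;> ring
  rw [Finset.sum_congr rfl fun i _ => h i]
  simpa using Finset.sum_ite_eq' Finset.univ j u

lemma sum_ind_eq' (w : Fin m → ℂ) (j : Fin m) :
    ∑ k, (if j = k then (1:ℂ) else 0) * w k = w j := by
  have h : ∀ k, (if j = k then (1:ℂ) else 0) * w k = if k = j then w k else 0 := by
    intro k
    by_cases h1 : j = k
    · subst h1; simp
    · rw [if_neg h1, if_neg (fun h => h1 h.symm)]; ring
  rw [Finset.sum_congr rfl fun k _ => h k]
  simpa using Finset.sum_ite_eq' Finset.univ j w

lemma sum_A (u : Fin m → ℂ) (j : Fin m) :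
    ∑ i, ((if i < j then (1:ℂ) else 0) + (if i = j then (1:ℂ) else 0)/2) * u i = av u j := by
  have h : ∀ i, ((if i < j then (1:ℂ) else 0) + (if i = j then (1:ℂ) else 0)/2) * u i
      = (if i < j then u i else 0) + ((if i = j then (1:ℂ) else 0) * u i) / 2 := by
    intro i; split_ifs <;> ring
  rw [Finset.sum_congr rfl fun i _ => h i, Finset.sum_add_distrib, av]
  congr 1
  rw [← Finset.sum_div, sum_ind_eq]

lemma sum_B (w : Fin m → ℂ) (j : Fin m) :
    ∑ k, ((if j < k then (1:ℂ) else 0) + (if j = k then (1:ℂ) else 0)/2) * w k = bv w j := by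
  have h : ∀ k, ((if j < k then (1:ℂ) else 0) + (if j = k then (1:ℂ) else 0)/2) * w k
      = (if j < k then w k else 0) + ((if j = k then (1:ℂ) else 0) * w k) / 2 := by
    intro k; split_ifs <;> ring
  rw [Finset.sum_congr rfl fun k _ => h k, Finset.sum_add_distrib, bv]
  congr 1
  rw [← Finset.sum_div, sum_ind_eq']

lemma L0 (u v w : Fin m → ℂ) :
    (∑ i, ∑ j, ∑ k, caxis m i j k * u i * v j * w k) = F u v w := by
  have hk : ∀ i j : Fin m, (∑ k, caxis m i j k * u i * v j * w k)
      = ((if i < j then (1:ℂ) else 0) + (if i = j then (1:ℂ) else 0)/2) * u i * v j * bv w j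
        - (if i = j then (1:ℂ) else 0) * u i * v j * w j / 12 := by
    intro i j
    have h : ∀ k, caxis m i j k * u i * v j * w k
        = (((if i < j then (1:ℂ) else 0) + (if i = j then (1:ℂ) else 0)/2) * u i * v j)
            * (((if j < k then (1:ℂ) else 0) + (if j = k then (1:ℂ) else 0)/2) * w k)
          - ((if i = j then (1:ℂ) else 0) * u i * v j / 12) * ((if j = k then (1:ℂ) else 0) * w k) := by
      intro k; rw [caxis_formula]; ring
    rw [Finset.sum_congr rfl fun k _ => h k, Finset.sum_sub_distrib,
      ← Finset.mul_sum, ← Finset.mul_sum, sum_B, sum_ind_eq']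
    ring
  have h1 : (∑ i, ∑ j, ∑ k, caxis m i j k * u i * v j * w k)
      = ∑ i, ∑ j, (((if i < j then (1:ℂ) else 0) + (if i = j then (1:ℂ) else 0)/2) * u i * v j * bv w j
        - (if i = j then (1:ℂ) else 0) * u i * v j * w j / 12) :=
    Finset.sum_congr rfl fun i _ => Finset.sum_congr rfl fun j _ => hk i j
  rw [h1, Finset.sum_comm, F]
  refine Finset.sum_congr rfl fun j _ => ?_
  have h2 : ∀ i, ((if i < j then (1:ℂ) else 0) + (if i = j then (1:ℂ) else 0)/2) * u i * v j * bv w j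
        - (if i = j then (1:ℂ) else 0) * u i * v j * w j / 12
      = (((if i < j then (1:ℂ) else 0) + (if i = j then (1:ℂ) else 0)/2) * u i) * (v j * bv w j)
        - ((if i = j then (1:ℂ) else 0) * u i) * (v j * w j / 12) := by
    intro i; ring
  rw [Finset.sum_congr rfl fun i _ => h2 i, Finset.sum_sub_distrib,
    ← Finset.sum_mul, ← Finset.sum_mul, sum_A, sum_ind_eq]
  ring


noncomputable def extv (u : Fin m → ℂ) (n : ℕ) : ℂ := if h : n < m then u ⟨n, h⟩ else 0

lemma extv_val (u : Fin m → ℂ) (j : Fin m) : extv u j.val = u j := by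
  rw [extv, dif_pos j.isLt]

lemma sum_lt_eq (u : Fin m → ℂ) (j : Fin m) :
    (∑ i, if i < j then u i else 0) = ∑ n ∈ Finset.range j.val, extv u n := by
  have h1 : (∑ i : Fin m, if i < j then u i else 0)
      = ∑ n ∈ Finset.range m, (if n < j.val then extv u n else 0) := by
    rw [← Fin.sum_univ_eq_sum_range (fun n => if n < j.val then extv u n else 0) m]
    refine Finset.sum_congr rfl fun i _ => ?_
    by_cases h : i < j
    · rw [if_pos h, if_pos (by exact h), extv_val]
    · rw [if_neg h, if_neg (by exact h)]
  rw [h1, Finset.sum_ite, Finset.sum_const_zero, add_zero]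
  congr 1
  ext n
  simp only [Finset.mem_filter, Finset.mem_range]
  constructor
  · rintro ⟨_, h2⟩; exact h2
  · intro h2; exact ⟨lt_of_lt_of_le h2 (le_of_lt j.isLt), h2⟩

lemma sv_eq_range (u : Fin m → ℂ) : sv u = ∑ n ∈ Finset.range m, extv u n := by
  rw [sv, ← Fin.sum_univ_eq_sum_range (fun n => extv u n) m]
  exact Finset.sum_congr rfl fun i _ => (extv_val u i).symm

lemma L_cube (u : Fin m → ℂ) : F u u u = sv u ^ 3 / 6 := by
  set S : ℕ → ℂ := fun n => ∑ k ∈ Finset.range n, extv u k with hS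
  have hterm : ∀ j : Fin m, av u j * u j * bv u j - u j * u j * u j / 12
      = (fun n => sv u * S (n+1) ^ 2 / 2 - S (n+1) ^ 3 / 3
          - (sv u * S n ^ 2 / 2 - S n ^ 3 / 3)) j.val := by
    intro j
    have hb : bv u j = sv u - av u j := by rw [← ab_lemma u j]; ring
    have ha : av u j = S j.val + u j / 2 := by rw [av, sum_lt_eq]
    have hS1 : S (j.val + 1) = S j.val + u j := by
      rw [hS]
      simp only
      rw [Finset.sum_range_succ, extv_val]
    simp only
    rw [hb, ha, hS1]
    ring
  have h2 : F u u u = ∑ n ∈ Finset.range m,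
      (sv u * S (n+1) ^ 2 / 2 - S (n+1) ^ 3 / 3 - (sv u * S n ^ 2 / 2 - S n ^ 3 / 3)) := by
    rw [F, ← Fin.sum_univ_eq_sum_range
      (fun n => sv u * S (n+1) ^ 2 / 2 - S (n+1) ^ 3 / 3 - (sv u * S n ^ 2 / 2 - S n ^ 3 / 3)) m]
    exact Finset.sum_congr rfl fun j _ => hterm j
  rw [h2, Finset.sum_range_sub (fun n => sv u * S n ^ 2 / 2 - S n ^ 3 / 3) m]
  have hSm : S m = sv u := (sv_eq_range u).symm
  have hS0 : S 0 = 0 := Finset.sum_range_zero _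
  rw [hSm, hS0]
  ring


lemma pull4 (g : Fin m → Fin m → Fin m → Fin m → ℂ) :
    ∑ i, ∑ j, ∑ k, ∑ α, g i j k α = ∑ α, ∑ i, ∑ j, ∑ k, g i j k α := by
  have h1 : ∀ i, ∑ j, ∑ k, ∑ α, g i j k α = ∑ α, ∑ j, ∑ k, g i j k α := by
    intro i
    have h2 : ∀ j : Fin m, ∑ k, ∑ α, g i j k α = ∑ α, ∑ k, g i j k α :=
      fun j => Finset.sum_comm
    rw [Finset.sum_congr rfl fun j _ => h2 j]
    exact Finset.sum_comm
  rw [Finset.sum_congr rfl fun i _ => h1 i]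
  exact Finset.sum_comm

lemma sum_swap6 (f : Fin m → Fin m → Fin m → Fin m → Fin m → Fin m → ℂ) :
    ∑ i, ∑ j, ∑ k, ∑ α, ∑ β, ∑ γ, f i j k α β γ
    = ∑ α, ∑ β, ∑ γ, ∑ i, ∑ j, ∑ k, f i j k α β γ :=
  calc ∑ i, ∑ j, ∑ k, ∑ α, ∑ β, ∑ γ, f i j k α β γ
      = ∑ α, ∑ i, ∑ j, ∑ k, ∑ β, ∑ γ, f i j k α β γ := pull4 _
    _ = ∑ α, ∑ β, ∑ i, ∑ j, ∑ k, ∑ γ, f i j k α β γ :=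
        Finset.sum_congr rfl fun α _ => pull4 _
    _ = ∑ α, ∑ β, ∑ γ, ∑ i, ∑ j, ∑ k, f i j k α β γ :=
        Finset.sum_congr rfl fun α _ => Finset.sum_congr rfl fun β _ => pull4 _

lemma rev3 (t : Fin m → Fin m → Fin m → ℂ) :
    ∑ a, ∑ b, ∑ c, t a b c = ∑ c, ∑ b, ∑ a, t a b c := by
  rw [Finset.sum_comm]
  rw [Finset.sum_congr rfl fun b (_ : b ∈ Finset.univ) => (Finset.sum_comm : ∑ a, ∑ c, t a b c = ∑ c, ∑ a, t a b c)]
  exact Finset.sum_comm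

noncomputable def Ya (X : Matrix (Fin m) (Fin m) ℂ) (u : Fin m → ℂ) : Fin m → ℂ :=
  fun i => ∑ α, u α * X α i

lemma LH (X : Matrix (Fin m) (Fin m) ℂ) (hstab : congrAct3 (caxis m) X = caxis m)
    (u v w : Fin m → ℂ) : F (Ya X u) (Ya X v) (Ya X w) = F u v w := by
  rw [← L0 (Ya X u) (Ya X v) (Ya X w), ← L0 u v w]
  have key : ∀ i j k, caxis m i j k * Ya X u i * Ya X v j * Ya X w k
      = ∑ α, ∑ β, ∑ γ, u α * v β * w γ * (caxis m i j k * X α i * X β j * X γ k) := by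
    intro i j k
    simp only [Ya, Finset.mul_sum, Finset.sum_mul]
    rw [rev3]
    refine Finset.sum_congr rfl fun α _ => ?_
    refine Finset.sum_congr rfl fun β _ => ?_
    refine Finset.sum_congr rfl fun γ _ => ?_
    ring
  calc ∑ i, ∑ j, ∑ k, caxis m i j k * Ya X u i * Ya X v j * Ya X w k
      = ∑ i, ∑ j, ∑ k, ∑ α, ∑ β, ∑ γ, u α * v β * w γ
          * (caxis m i j k * X α i * X β j * X γ k) :=
        Finset.sum_congr rfl fun i _ => Finset.sum_congr rfl fun j _ =>
          Finset.sum_congr rfl fun k _ => key i j k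
    _ = ∑ α, ∑ β, ∑ γ, ∑ i, ∑ j, ∑ k, u α * v β * w γ
          * (caxis m i j k * X α i * X β j * X γ k) := sum_swap6 _
    _ = ∑ α, ∑ β, ∑ γ, u α * v β * w γ * congrAct3 (caxis m) X α β γ := by
        refine Finset.sum_congr rfl fun α _ => Finset.sum_congr rfl fun β _ =>
          Finset.sum_congr rfl fun γ _ => ?_
        rw [congrAct3, Finset.mul_sum]
        refine Finset.sum_congr rfl fun i _ => ?_
        rw [Finset.mul_sum]
        refine Finset.sum_congr rfl fun j _ => ?_
        rw [Finset.mul_sum]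
    _ = ∑ α, ∑ β, ∑ γ, caxis m α β γ * u α * v β * w γ := by
        refine Finset.sum_congr rfl fun α _ => Finset.sum_congr rfl fun β _ =>
          Finset.sum_congr rfl fun γ _ => ?_
        rw [hstab]
        ring


noncomputable def Bil (u v : Fin m → ℂ) : ℂ := ∑ j, v j * av u j

lemma Fdiff (u v w : Fin m → ℂ) :
    F u v w - F w v u = sv w * Bil u v - sv u * Bil w v := by
  rw [F, F, Bil, Bil, ← Finset.sum_sub_distrib, Finset.mul_sum, Finset.mul_sum,
    ← Finset.sum_sub_distrib]
  refine Finset.sum_congr rfl fun j _ => ?_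
  have h1 : bv w j = sv w - av w j := by rw [← ab_lemma w j]; ring
  have h2 : bv u j = sv u - av u j := by rw [← ab_lemma u j]; ring
  rw [h1, h2]
  ring

lemma Bil_expand (x y : Fin m → ℂ) :
    Bil x y = (∑ j, ∑ i, if i < j then y j * x i else 0) + (∑ j, y j * x j / 2) := by
  rw [Bil, ← Finset.sum_add_distrib]
  refine Finset.sum_congr rfl fun j _ => ?_
  rw [av, mul_add, Finset.mul_sum]
  congr 1
  · refine Finset.sum_congr rfl fun i _ => ?_
    split_ifs <;> simp
  · ring

lemma Bil_sym (u v : Fin m → ℂ) : Bil u v + Bil v u = sv u * sv v := by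
  rw [Bil_expand, Bil_expand]
  have hc : (∑ j, ∑ i, if i < j then u j * v i else 0)
      = ∑ j, ∑ i, if j < i then u i * v j else 0 := Finset.sum_comm
  rw [hc]
  have hd : (∑ j, v j * u j / 2) + (∑ j, u j * v j / 2) = ∑ j, ∑ i, if i = j then u i * v j else 0 := by
    rw [← Finset.sum_add_distrib]
    refine Finset.sum_congr rfl fun j _ => ?_
    have : (∑ i, if i = j then u i * v j else 0) = u j * v j := by
      simpa using Finset.sum_ite_eq' Finset.univ j (fun i => u i * v j)
    rw [this]
    ring
  have hsv : sv u * sv v = ∑ j, ∑ i, u i * v j := by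
    rw [sv, sv, Finset.sum_mul_sum]
    exact Finset.sum_comm
  rw [hsv]
  have key : ∀ j : Fin m, ((∑ i, if i < j then v j * u i else 0) + (∑ i, if j < i then u i * v j else 0))
        + (∑ i, if i = j then u i * v j else 0) = ∑ i, u i * v j := by
    intro j
    rw [← Finset.sum_add_distrib, ← Finset.sum_add_distrib]
    refine Finset.sum_congr rfl fun i _ => ?_
    rcases lt_trichotomy i j with h | h | h
    · simp [h, h.ne, not_lt_of_gt h, mul_comm]
    · simp [h, lt_irrefl]
    · simp [h, h.ne', not_lt_of_gt h]
  calc ((∑ j, ∑ i, if i < j then v j * u i else 0) + ∑ j, v j * u j / 2)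
        + ((∑ j, ∑ i, if j < i then u i * v j else 0) + ∑ j, u j * v j / 2)
      = ∑ j, (((∑ i, if i < j then v j * u i else 0) + (∑ i, if j < i then u i * v j else 0))
          + (∑ i, if i = j then u i * v j else 0)) := by
        rw [Finset.sum_add_distrib, Finset.sum_add_distrib, ← hd]
        ring
    _ = ∑ j, ∑ i, u i * v j := Finset.sum_congr rfl fun j _ => key j

lemma sv_Ya (X : Matrix (Fin m) (Fin m) ℂ) (hrow : ∀ α, ∑ i, X α i = 1)
    (u : Fin m → ℂ) : sv (Ya X u) = sv u := by
  simp only [sv, Ya]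
  rw [Finset.sum_comm]
  refine Finset.sum_congr rfl fun α _ => ?_
  rw [← Finset.mul_sum, hrow α, mul_one]

lemma Bil_inv (X : Matrix (Fin m) (Fin m) ℂ) (hm : 0 < m)
    (hstab : congrAct3 (caxis m) X = caxis m) (hrow : ∀ α, ∑ i, X α i = 1) :
    ∀ u v, Bil (Ya X u) (Ya X v) = Bil u v := by
  have hs : ∀ x, sv (Ya X x) = sv x := sv_Ya X hrow
  have hδ : ∀ u v w, sv w * (Bil (Ya X u) (Ya X v) - Bil u v)
      = sv u * (Bil (Ya X w) (Ya X v) - Bil w v) := by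
    intro u v w
    have h1 := LH X hstab u v w
    have h2 := LH X hstab w v u
    have d1 := Fdiff (Ya X u) (Ya X v) (Ya X w)
    have d2 := Fdiff u v w
    rw [hs, hs] at d1
    linear_combination h1 - h2 - d1 + d2
  have hskew : ∀ u v, (Bil (Ya X u) (Ya X v) - Bil u v)
      + (Bil (Ya X v) (Ya X u) - Bil v u) = 0 := by
    intro u v
    have b1 := Bil_sym (Ya X u) (Ya X v)
    have b2 := Bil_sym u v
    rw [hs, hs] at b1
    linear_combination b1 - b2
  set i0 : Fin m := ⟨0, hm⟩
  set w0 : Fin m → ℂ := fun i => if i = i0 then (1:ℂ) else 0 with hw0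
  have hsw0 : sv w0 = 1 := by
    rw [sv, hw0]
    simpa using Finset.sum_ite_eq' Finset.univ i0 (fun _ => (1:ℂ))
  have hl0 : Bil (Ya X w0) (Ya X w0) - Bil w0 w0 = 0 := by
    have h := hskew w0 w0
    linear_combination h / 2
  have hlv : ∀ v, Bil (Ya X w0) (Ya X v) - Bil w0 v = 0 := by
    intro v
    have h1 := hskew w0 v
    have h2 := hδ v w0 w0
    rw [hsw0, hl0, mul_zero] at h2
    linear_combination h1 - h2
  intro u v
  have h := hδ u v w0
  rw [hsw0, hlv v, mul_zero] at h
  linear_combination h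

noncomputable def eb (i : Fin m) : Fin m → ℂ := fun t => if t = i then 1 else 0

lemma Ya_eb (X : Matrix (Fin m) (Fin m) ℂ) (β : Fin m) :
    Ya X (eb β) = fun j => X β j := by
  funext j
  simp only [Ya, eb]
  have e : ∀ α : Fin m, (if α = β then (1:ℂ) else 0) * X α j
      = if α = β then X α j else 0 := by
    intro α; split_ifs <;> ring
  rw [Finset.sum_congr rfl fun α _ => e α]
  simpa using Finset.sum_ite_eq' Finset.univ β (fun α => X α j)

lemma Bil_eb (u : Fin m → ℂ) (β : Fin m) : Bil u (eb β) = av u β := by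
  rw [Bil]
  have e : ∀ j : Fin m, eb β j * av u j = if j = β then av u j else 0 := by
    intro j; simp only [eb]; split_ifs <;> ring
  rw [Finset.sum_congr rfl fun j _ => e j]
  simpa using Finset.sum_ite_eq' Finset.univ β (fun j => av u j)

lemma F_mid_eb (u w : Fin m → ℂ) (β : Fin m) :
    F u (eb β) w = av u β * bv w β - u β * w β / 12 := by
  rw [F]
  have e : ∀ j : Fin m, av u j * eb β j * bv w j - u j * eb β j * w j / 12
      = if j = β then (av u j * bv w j - u j * w j / 12) else 0 := by
    intro j; simp only [eb]; split_ifs <;> ring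
  rw [Finset.sum_congr rfl fun j _ => e j]
  simpa using Finset.sum_ite_eq' Finset.univ β (fun j => av u j * bv w j - u j * w j / 12)

lemma hBa (X : Matrix (Fin m) (Fin m) ℂ) (hm : 0 < m)
    (hstab : congrAct3 (caxis m) X = caxis m) (hrow : ∀ α, ∑ i, X α i = 1) :
    ∀ w β, (∑ j, X β j * av (Ya X w) j) = av w β := by
  intro w β
  have h := Bil_inv X hm hstab hrow w (eb β)
  rw [Bil_eb] at h
  rw [Bil, Ya_eb] at h
  simp only at h
  calc (∑ j, X β j * av (Ya X w) j) = Bil (Ya X w) (fun j => X β j) := by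
        rw [Bil]
    _ = av w β := h
  -- note: Bil (Ya X w) (fun j => X β j) = ∑ j, X β j * av (Ya X w) j definitionally

lemma E1 (X : Matrix (Fin m) (Fin m) ℂ) (hm : 0 < m)
    (hstab : congrAct3 (caxis m) X = caxis m) (hrow : ∀ α, ∑ i, X α i = 1) :
    ∀ u w β, (∑ j, X β j * (av (Ya X u) j * av (Ya X w) j + Ya X u j * Ya X w j / 12))
      = av u β * av w β + u β * w β / 12 := by
  have hs := sv_Ya X hrow
  intro u w β
  have h := LH X hstab u (eb β) w
  rw [F_mid_eb, Ya_eb, F] at h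
  have hbv : ∀ j, bv (Ya X w) j = sv w - av (Ya X w) j := by
    intro j
    have h2 := ab_lemma (Ya X w) j
    rw [hs] at h2
    linear_combination h2
  have hbv' : bv w β = sv w - av w β := by rw [← ab_lemma w β]; ring
  have hsum : (∑ j, (av (Ya X u) j * X β j * bv (Ya X w) j
        - Ya X u j * X β j * Ya X w j / 12))
      = sv w * (∑ j, X β j * av (Ya X u) j)
        - ∑ j, X β j * (av (Ya X u) j * av (Ya X w) j + Ya X u j * Ya X w j / 12) := by
    rw [Finset.mul_sum, ← Finset.sum_sub_distrib]
    refine Finset.sum_congr rfl fun j _ => ?_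
    rw [hbv j]
    ring
  rw [hsum, hBa X hm hstab hrow u β, hbv'] at h
  linear_combination (-1 : ℂ) * h

noncomputable def epsv : Fin m → ℂ := fun j => (-1)^(j.val)

lemma eps_sq (j : Fin m) : epsv j * epsv j = (1:ℂ) := by
  show ((-1:ℂ)^(j.val)) * ((-1:ℂ)^(j.val)) = 1
  rw [← pow_add]
  exact Even.neg_one_pow ⟨j.val, rfl⟩

lemma av_eps (j : Fin m) : av (epsv : Fin m → ℂ) j = 1/2 := by
  rw [av, sum_lt_eq]
  have e : ∀ n ∈ Finset.range j.val, extv (epsv : Fin m → ℂ) n = (-1:ℂ)^n := by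
    intro n hn
    rw [Finset.mem_range] at hn
    rw [extv, dif_pos (lt_trans hn j.isLt)]
    rfl
  have hj : epsv j = (-1:ℂ)^(j.val) := rfl
  rw [Finset.sum_congr rfl e, neg_one_geom_sum, hj]
  rcases Nat.even_or_odd j.val with h | h
  · rw [if_pos h, h.neg_one_pow]
    norm_num
  · rw [if_neg (Nat.not_even_iff_odd.mpr h), h.neg_one_pow]
    norm_num

lemma sv_eb (β : Fin m) : sv (eb β) = 1 := by
  rw [sv]
  simp only [eb]
  simpa using Finset.sum_ite_eq' Finset.univ β (fun _ => (1:ℂ))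

lemma av_scale (c : ℂ) (x : Fin m → ℂ) (j : Fin m) :
    av (fun t => c * x t) j = c * av x j := by
  rw [av, av, mul_add, Finset.mul_sum]
  congr 1
  · refine Finset.sum_congr rfl fun i _ => ?_
    split_ifs <;> simp
  · ring

lemma Ya_surj (X : Matrix (Fin m) (Fin m) ℂ) (hX : IsUnit X) (c : Fin m → ℂ) :
    ∃ u, Ya X u = c := by
  have hdet : IsUnit X.det := (Matrix.isUnit_iff_isUnit_det X).mp hX
  refine ⟨fun α => ∑ t, c t * X⁻¹ t α, ?_⟩
  funext i
  simp only [Ya]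
  have e1 : ∀ α, (∑ t, c t * X⁻¹ t α) * X α i = ∑ t, c t * (X⁻¹ t α * X α i) := by
    intro α
    rw [Finset.sum_mul]
    exact Finset.sum_congr rfl fun t _ => by ring
  rw [Finset.sum_congr rfl fun α _ => e1 α, Finset.sum_comm]
  have e2 : ∀ t, (∑ α, c t * (X⁻¹ t α * X α i)) = if t = i then c t else 0 := by
    intro t
    rw [← Finset.mul_sum]
    have h3 : (∑ α, X⁻¹ t α * X α i) = if t = i then 1 else 0 := by
      calc (∑ α, X⁻¹ t α * X α i) = (X⁻¹ * X) t i := (Matrix.mul_apply).symm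
        _ = (1 : Matrix (Fin m) (Fin m) ℂ) t i := by rw [Matrix.nonsing_inv_mul X hdet]
        _ = if t = i then 1 else 0 := Matrix.one_apply
    rw [h3]
    split_ifs <;> ring
  rw [Finset.sum_congr rfl fun t _ => e2 t]
  simpa using Finset.sum_ite_eq' Finset.univ i c

noncomputable def th (X : Matrix (Fin m) (Fin m) ℂ) (p q : Fin m → ℂ) (β : Fin m) : ℂ :=
  (∑ j, X β j * p j) * (∑ j, X β j * q j) - ∑ j, X β j * (p j * q j)

noncomputable def mcol (i j : Fin m) : ℂ :=
  (if i < j then 1 else 0) + (if i = j then 1 else 0)/2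

lemma th_eb (X : Matrix (Fin m) (Fin m) ℂ) (c d β : Fin m) :
    th X (eb c) (eb d) β = X β c * X β d - (if c = d then X β c else 0) := by
  rw [th]
  have e1 : ∀ (c : Fin m), (∑ j, X β j * eb c j) = X β c := by
    intro c
    have e : ∀ j : Fin m, X β j * eb c j = if j = c then X β j else 0 := by
      intro j; simp only [eb]; split_ifs <;> ring
    rw [Finset.sum_congr rfl fun j _ => e j]
    simpa using Finset.sum_ite_eq' Finset.univ c (fun j => X β j)
  rw [e1, e1]
  congr 1
  have e : ∀ j : Fin m, X β j * (eb c j * eb d j)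
      = if j = c then (if c = d then X β j else 0) else 0 := by
    intro j
    simp only [eb]
    by_cases h1 : j = c
    · subst h1
      by_cases h2 : j = d
      · subst h2; simp
      · simp [h2]
    · simp [h1]
  rw [Finset.sum_congr rfl fun j _ => e j]
  simpa using Finset.sum_ite_eq' Finset.univ c (fun j => if c = d then X β j else 0)

lemma th_bilin (X : Matrix (Fin m) (Fin m) ℂ) (p q : Fin m → ℂ) (β : Fin m) :
    th X p q β = ∑ c, ∑ d, p c * q d * th X (eb c) (eb d) β := by
  have e : ∀ c d : Fin m, p c * q d * th X (eb c) (eb d) β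
      = (X β c * p c) * (X β d * q d) - (if c = d then p c * q d * X β c else 0) := by
    intro c d
    rw [th_eb]
    split_ifs <;> ring
  symm
  calc (∑ c, ∑ d, p c * q d * th X (eb c) (eb d) β)
      = ∑ c, ∑ d, ((X β c * p c) * (X β d * q d)
          - (if c = d then p c * q d * X β c else 0)) :=
        Finset.sum_congr rfl fun c _ => Finset.sum_congr rfl fun d _ => e c d
    _ = (∑ c, ∑ d, (X β c * p c) * (X β d * q d))
        - ∑ c, ∑ d, (if c = d then p c * q d * X β c else 0) := by
        rw [← Finset.sum_sub_distrib]
        exact Finset.sum_congr rfl fun c _ => by rw [← Finset.sum_sub_distrib]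
    _ = th X p q β := by
        rw [th]
        congr 1
        · rw [Finset.sum_mul_sum]
        · have h : ∀ c, (∑ d, if c = d then p c * q d * X β c else 0) = p c * q c * X β c := by
            intro c
            simpa using Finset.sum_ite_eq Finset.univ c (fun d => p c * q d * X β c)
          rw [Finset.sum_congr rfl fun c _ => h c]
          exact Finset.sum_congr rfl fun c _ => by ring


lemma av_eps_eb (i j : Fin m) :
    av (fun k => epsv k * eb i k) j = epsv i * mcol i j := by
  rw [av, mcol]
  have e : ∀ t : Fin m, (if t < j then epsv t * eb i t else 0)
      = if t = i then (if i < j then epsv i else 0) else 0 := by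
    intro t
    simp only [eb]
    by_cases h1 : t = i
    · subst h1
      by_cases h2 : t < j <;> simp [h2]
    · by_cases h2 : t < j <;> simp [h1, h2]
  rw [Finset.sum_congr rfl fun t _ => e t]
  have h2 : (∑ t, if t = i then (if i < j then epsv i else 0) else 0)
      = (if i < j then epsv i else 0) := by
    simpa using Finset.sum_ite_eq' Finset.univ i (fun _ => if i < j then epsv i else 0)
  rw [h2]
  simp only [eb]
  by_cases h : i = j
  · subst h
    simp [lt_irrefl]
    ring
  · have h' : ¬ j = i := fun hh => h hh.symm
    by_cases h2 : i < j <;> simp [h, h', h2]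

lemma sum_X_eb (X : Matrix (Fin m) (Fin m) ℂ) (β c : Fin m) :
    (∑ j, X β j * eb c j) = X β c := by
  have e : ∀ j : Fin m, X β j * eb c j = if j = c then X β j else 0 := by
    intro j; simp only [eb]; split_ifs <;> ring
  rw [Finset.sum_congr rfl fun j _ => e j]
  simpa using Finset.sum_ite_eq' Finset.univ c (fun j => X β j)

lemma sum_X_eb2 (X : Matrix (Fin m) (Fin m) ℂ) (β i j : Fin m) :
    (∑ t, X β t * (eb i t * eb j t)) = if i = j then X β i else 0 := by
  have e : ∀ t : Fin m, X β t * (eb i t * eb j t)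
      = if t = i then (if i = j then X β t else 0) else 0 := by
    intro t
    simp only [eb]
    by_cases h1 : t = i
    · subst h1
      by_cases h2 : t = j
      · subst h2; simp
      · simp [h2]
    · simp [h1]
  rw [Finset.sum_congr rfl fun t _ => e t]
  simpa using Finset.sum_ite_eq' Finset.univ i (fun t => if i = j then X β t else 0)

noncomputable def thE (X : Matrix (Fin m) (Fin m) ℂ) (c d β : Fin m) : ℂ :=
  X β c * X β d - (if c = d then X β c else 0)

lemma mcol_lt (i c : Fin m) (h : c < i) : mcol i c = 0 := by
  rw [mcol, if_neg (by exact not_lt_of_gt h), if_neg (by exact (ne_of_gt h))]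
  norm_num

lemma mcol_self (i : Fin m) : mcol i i = 1/2 := by
  rw [mcol, if_neg (lt_irrefl i), if_pos rfl]
  norm_num

lemma av_eb (i j : Fin m) : av (eb i) j = mcol i j := by
  rw [av, mcol]
  have e : ∀ t : Fin m, (if t < j then eb i t else 0)
      = if t = i then (if i < j then (1:ℂ) else 0) else 0 := by
    intro t
    simp only [eb]
    by_cases h1 : t = i
    · subst h1
      by_cases h2 : t < j <;> simp [h2]
    · by_cases h2 : t < j <;> simp [h1, h2]
  rw [Finset.sum_congr rfl fun t _ => e t]
  have h2 : (∑ t, if t = i then (if i < j then (1:ℂ) else 0) else 0)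
      = (if i < j then (1:ℂ) else 0) := by
    simpa using Finset.sum_ite_eq' Finset.univ i (fun _ => if i < j then (1:ℂ) else 0)
  rw [h2]
  simp only [eb]
  by_cases h : i = j
  · subst h
    simp
  · have h' : ¬ j = i := fun hh => h hh.symm
    simp [h, h']

lemma Lmain (X : Matrix (Fin m) (Fin m) ℂ) (hm : 0 < m) (hX : IsUnit X)
    (hstab : congrAct3 (caxis m) X = caxis m) (hrow : ∀ α, ∑ i, X α i = 1) : X = 1 := by
  obtain ⟨π, hπ⟩ := Ya_surj X hX epsv
  have haπ : ∀ β, av π β = 1/2 := by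
    intro β
    have h := Bil_inv X hm hstab hrow π (eb β)
    rw [hπ, Bil_eb, Ya_eb] at h
    have h2 : (∑ j, X β j * av (epsv : Fin m → ℂ) j) = av π β := h
    have e : ∀ j : Fin m, X β j * av (epsv : Fin m → ℂ) j = X β j * (1/2) :=
      fun j => by rw [av_eps]
    rw [Finset.sum_congr rfl fun j _ => e j] at h2
    have h3 : (∑ j, X β j * (1/2:ℂ)) = 1/2 := by
      rw [← Finset.sum_mul, hrow β]
      ring
    rw [h3] at h2
    exact h2.symm
  have clubL : ∀ w β, (∑ j, X β j * (epsv j * Ya X w j)) = π β * w β := by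
    intro w β
    have h := E1 X hm hstab hrow (fun α => 2 * π α) w β
    have hY2 : Ya X (fun α => 2 * π α) = fun j => 2 * epsv j := by
      funext j
      show (∑ α, (2 * π α) * X α j) = 2 * epsv j
      calc (∑ α, (2 * π α) * X α j) = 2 * ∑ α, π α * X α j := by
            rw [Finset.mul_sum]
            exact Finset.sum_congr rfl fun α _ => by ring
        _ = 2 * epsv j := by rw [show (∑ α, π α * X α j) = Ya X π j from rfl, hπ]
    rw [hY2] at h
    beta_reduce at h
    have hava : ∀ t : Fin m, av (fun j => 2 * epsv j) t = 1 := by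
      intro t
      rw [av_scale, av_eps]
      norm_num
    have hav2 : av (fun α => 2 * π α) β = 1 := by
      rw [av_scale, haπ β]
      norm_num
    have hsplit : (∑ j, X β j * (av (fun j => 2 * epsv j) j * av (Ya X w) j
          + 2 * epsv j * Ya X w j / 12))
        = (∑ j, X β j * av (Ya X w) j) + (1/6) * ∑ j, X β j * (epsv j * Ya X w j) := by
      rw [Finset.mul_sum, ← Finset.sum_add_distrib]
      refine Finset.sum_congr rfl fun j _ => ?_
      rw [hava j]
      ring
    rw [hsplit, hBa X hm hstab hrow w β, hav2] at h
    linear_combination 6 * h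
  have hπ2 : ∀ β, π β * π β = 1 := by
    intro β
    have h := clubL π β
    rw [hπ] at h
    have e : ∀ j : Fin m, X β j * (epsv j * epsv j) = X β j := by
      intro j
      rw [eps_sq]
      ring
    rw [Finset.sum_congr rfl fun j _ => e j, hrow β] at h
    exact h.symm
  -- Step: the Hadamard-Stein identity
  have ThetaM : ∀ (c d : Fin m → ℂ) (β : Fin m),
      ((∑ j, X β j * av c j) * (∑ j, X β j * av d j) - ∑ j, X β j * (av c j * av d j))
      = -(1/12) * ((∑ j, X β j * (epsv j * c j)) * (∑ j, X β j * (epsv j * d j))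
          - ∑ j, X β j * ((epsv j * c j) * (epsv j * d j))) := by
    intro c d β
    obtain ⟨u, hu⟩ := Ya_surj X hX c
    obtain ⟨w, hw⟩ := Ya_surj X hX d
    have h := E1 X hm hstab hrow u w β
    rw [hu, hw] at h
    have hPR : (∑ j, X β j * (av c j * av d j + c j * d j / 12))
        = (∑ j, X β j * (av c j * av d j)) + (1/12) * ∑ j, X β j * (c j * d j) := by
      rw [Finset.mul_sum, ← Finset.sum_add_distrib]
      exact Finset.sum_congr rfl fun j _ => by ring
    rw [hPR] at h
    have h2 : av u β = ∑ j, X β j * av c j := by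
      have h3 := hBa X hm hstab hrow u β
      rw [hu] at h3
      exact h3.symm
    have h3 : av w β = ∑ j, X β j * av d j := by
      have h4 := hBa X hm hstab hrow w β
      rw [hw] at h4
      exact h4.symm
    have h4 : π β * u β = ∑ j, X β j * (epsv j * c j) := by
      have h5 := clubL u β
      rw [hu] at h5
      exact h5.symm
    have h5 : π β * w β = ∑ j, X β j * (epsv j * d j) := by
      have h6 := clubL w β
      rw [hw] at h6
      exact h6.symm
    have h6 := hπ2 β
    have h7 : (∑ j, X β j * ((epsv j * c j) * (epsv j * d j))) = ∑ j, X β j * (c j * d j) := by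
      refine Finset.sum_congr rfl fun j _ => ?_
      linear_combination (X β j * c j * d j) * (eps_sq j)
    rw [h2, h3] at h
    linear_combination (-1:ℂ) * h - (1/12) * h7
      - ((∑ j, X β j * (epsv j * d j))/12) * h4 - (u β * π β/12) * h5 + (u β * w β/12) * h6
  -- Downward induction: thE vanishes
  have keyInd : ∀ t : ℕ, ∀ i j : Fin m, 2*m - (i.val + j.val) ≤ t → ∀ β, thE X i j β = 0 := by
    intro t
    induction t using Nat.strong_induction_on with
    | _ t IH =>
      intro i j hle β
      have him := i.isLt
      have hjm := j.isLt
      -- the ThetaM instance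
      have hM := ThetaM (fun k => epsv k * eb i k) (fun k => epsv k * eb j k) β
      -- rewrite the av's
      have ei : ∀ t' : Fin m, av (fun k => epsv k * eb i k) t' = epsv i * mcol i t' :=
        av_eps_eb i
      have ej : ∀ t' : Fin m, av (fun k => epsv k * eb j k) t' = epsv j * mcol j t' :=
        av_eps_eb j
      have hee1 : ∀ t' : Fin m, epsv t' * (epsv t' * eb i t') = eb i t' := by
        intro t'
        linear_combination (eb i t') * (eps_sq t')
      have hee2 : ∀ t' : Fin m, epsv t' * (epsv t' * eb j t') = eb j t' := by
        intro t'
        linear_combination (eb j t') * (eps_sq t')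
      -- four sum rewrites
      have r1 : (∑ t', X β t' * av (fun k => epsv k * eb i k) t')
          = epsv i * ∑ t', X β t' * mcol i t' := by
        rw [Finset.mul_sum]
        exact Finset.sum_congr rfl fun t' _ => by rw [ei t']; ring
      have r2 : (∑ t', X β t' * av (fun k => epsv k * eb j k) t')
          = epsv j * ∑ t', X β t' * mcol j t' := by
        rw [Finset.mul_sum]
        exact Finset.sum_congr rfl fun t' _ => by rw [ej t']; ring
      have r3 : (∑ t', X β t' * (av (fun k => epsv k * eb i k) t'
            * av (fun k => epsv k * eb j k) t'))
          = epsv i * epsv j * ∑ t', X β t' * (mcol i t' * mcol j t') := by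
        rw [Finset.mul_sum]
        exact Finset.sum_congr rfl fun t' _ => by rw [ei t', ej t']; ring
      have r4 : (∑ t', X β t' * (epsv t' * (epsv t' * eb i t'))) = X β i := by
        rw [Finset.sum_congr rfl fun t' _ => by rw [hee1 t']]
        exact sum_X_eb X β i
      have r5 : (∑ t', X β t' * (epsv t' * (epsv t' * eb j t'))) = X β j := by
        rw [Finset.sum_congr rfl fun t' _ => by rw [hee2 t']]
        exact sum_X_eb X β j
      have r6 : (∑ t', X β t' * ((epsv t' * (epsv t' * eb i t'))
            * (epsv t' * (epsv t' * eb j t'))))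
          = if i = j then X β i else 0 := by
        rw [Finset.sum_congr rfl fun t' _ => by rw [hee1 t', hee2 t']]
        exact sum_X_eb2 X β i j
      rw [r1, r2, r3, r4, r5, r6] at hM
      -- hM : εi Mi * (εj Mj) - εiεj P2 = -(1/12) * (Xβi Xβj - ite)
      have hfold : X β i * X β j - (if i = j then X β i else 0) = thE X i j β := rfl
      rw [hfold] at hM
      -- bilinearity expansion
      have hbil : ((∑ t', X β t' * mcol i t') * (∑ t', X β t' * mcol j t')
            - ∑ t', X β t' * (mcol i t' * mcol j t'))
          = ∑ c, ∑ d, mcol i c * mcol j d * thE X c d β := by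
        have hb := th_bilin X (fun t' => mcol i t') (fun t' => mcol j t') β
        calc ((∑ t', X β t' * mcol i t') * (∑ t', X β t' * mcol j t')
              - ∑ t', X β t' * (mcol i t' * mcol j t'))
            = th X (fun t' => mcol i t') (fun t' => mcol j t') β := rfl
          _ = ∑ c, ∑ d, mcol i c * mcol j d * th X (eb c) (eb d) β := hb
          _ = ∑ c, ∑ d, mcol i c * mcol j d * thE X c d β :=
              Finset.sum_congr rfl fun c _ => Finset.sum_congr rfl fun d _ => by
                rw [th_eb]
                rfl
      -- the sum evaluates via the induction hypothesis
      have hIH : (∑ c, ∑ d, mcol i c * mcol j d * thE X c d β)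
          = (1/4) * thE X i j β := by
        have hpt : ∀ c d : Fin m, mcol i c * mcol j d * thE X c d β
            = if c = i then (if d = j then (1/4) * thE X i j β else 0) else 0 := by
          intro c d
          by_cases hc : c = i
          · subst hc
            by_cases hd : d = j
            · subst hd
              rw [mcol_self, mcol_self, if_pos rfl, if_pos rfl]
              ring
            · rw [if_pos rfl, if_neg hd]
              rcases lt_trichotomy d j with h | h | h
              · rw [mcol_lt j d h]
                ring
              · exact absurd h hd
              · have hz : thE X c d β = 0 := by
                  refine IH (2*m - (c.val + d.val)) ?_ c d (le_refl _) β
                  have hdj : j.val < d.val := h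
                  omega
                rw [hz]
                ring
          · rw [if_neg hc]
            rcases lt_trichotomy c i with h | h | h
            · rw [mcol_lt i c h]
              ring
            · exact absurd h hc
            · rcases lt_trichotomy d j with h2 | h2 | h2
              · rw [mcol_lt j d h2]
                ring
              · have hz : thE X c d β = 0 := by
                  refine IH (2*m - (c.val + d.val)) ?_ c d (le_refl _) β
                  have hic : i.val < c.val := h
                  have : d.val = j.val := by rw [h2]
                  omega
                rw [hz]
                ring
              · have hz : thE X c d β = 0 := by
                  refine IH (2*m - (c.val + d.val)) ?_ c d (le_refl _) β
                  have hic : i.val < c.val := h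
                  have hdj : j.val < d.val := h2
                  omega
                rw [hz]
                ring
        rw [Finset.sum_congr rfl fun c _ => Finset.sum_congr rfl fun d _ => hpt c d]
        have h1 : ∀ c : Fin m,
            (∑ d, if c = i then (if d = j then (1/4) * thE X i j β else 0) else 0)
            = if c = i then (1/4) * thE X i j β else 0 := by
          intro c
          by_cases hc : c = i
          · simp only [if_pos hc]
            simpa using Finset.sum_ite_eq' Finset.univ j (fun _ => (1/4) * thE X i j β)
          · simp [hc]
        rw [Finset.sum_congr rfl fun c _ => h1 c]
        simpa using Finset.sum_ite_eq' Finset.univ i (fun _ => (1/4) * thE X i j β)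
      -- combine
      have key : epsv i * epsv j * (((∑ t', X β t' * mcol i t') * (∑ t', X β t' * mcol j t')
            - ∑ t', X β t' * (mcol i t' * mcol j t'))) = -(1/12) * thE X i j β := by
        linear_combination hM
      rw [hbil, hIH] at key
      have hee : epsv i * epsv j = (-1:ℂ)^(i.val + j.val) := by
        show ((-1:ℂ)^(i.val)) * ((-1:ℂ)^(j.val)) = (-1:ℂ)^(i.val + j.val)
        rw [pow_add]
      rcases Nat.even_or_odd (i.val + j.val) with he | ho
      · have h1 : epsv i * epsv j = 1 := by rw [hee, he.neg_one_pow]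
        rw [h1] at key
        linear_combination 3 * key
      · have h1 : epsv i * epsv j = -1 := by rw [hee, ho.neg_one_pow]
        rw [h1] at key
        linear_combination (-6 : ℂ) * key
  have hθ : ∀ i j β : Fin m, thE X i j β = 0 := by
    intro i j β
    exact keyInd (2*m) i j (by omega) β
  -- entries are idempotent and rows have disjoint supports
  have hsq : ∀ β i, X β i * X β i = X β i := by
    intro β i
    have h := hθ i i β
    rw [thE, if_pos rfl] at h
    linear_combination h
  have hdisj : ∀ β i j, i ≠ j → X β i * X β j = 0 := by
    intro β i j hij
    have h := hθ i j β
    rw [thE, if_neg hij] at h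
    linear_combination h
  -- each row is a standard basis vector
  have hex : ∀ β, ∃ i, X β i ≠ 0 := by
    intro β
    by_contra h
    push_neg at h
    have h2 := hrow β
    rw [Finset.sum_eq_zero fun i _ => h i] at h2
    exact one_ne_zero h2.symm
  choose σ hσ using hex
  have hσ1 : ∀ β, X β (σ β) = 1 :=
    fun β => mul_left_cancel₀ (hσ β) ((hsq β (σ β)).trans (mul_one _).symm)
  have hval : ∀ β i, X β i = if i = σ β then 1 else 0 := by
    intro β i
    by_cases h : i = σ β
    · rw [if_pos h, h]
      exact hσ1 β
    · rw [if_neg h]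
      have h2 := hdisj β i (σ β) h
      rw [hσ1 β, mul_one] at h2
      exact h2
  -- σ is injective
  have hinj : Function.Injective σ := by
    intro β β' hσσ
    by_contra hne
    have hdet : IsUnit X.det := (Matrix.isUnit_iff_isUnit_det X).mp hX
    have hv : ∀ i, (∑ α, ((if α = β then (1:ℂ) else 0) - (if α = β' then 1 else 0)) * X α i)
        = 0 := by
      intro i
      have e : ∀ α, ((if α = β then (1:ℂ) else 0) - (if α = β' then 1 else 0)) * X α i
          = (if α = β then X α i else 0) - (if α = β' then X α i else 0) := by
        intro α; split_ifs <;> ring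
      rw [Finset.sum_congr rfl fun α _ => e α, Finset.sum_sub_distrib]
      have e1 : (∑ α, if α = β then X α i else 0) = X β i := by
        simpa using Finset.sum_ite_eq' Finset.univ β (fun α => X α i)
      have e2 : (∑ α, if α = β' then X α i else 0) = X β' i := by
        simpa using Finset.sum_ite_eq' Finset.univ β' (fun α => X α i)
      rw [e1, e2, hval β i, hval β' i, hσσ]
      ring
    have hzero : ((if β = β then (1:ℂ) else 0) - (if β = β' then 1 else 0)) = 0 := by
      have h1 : (∑ i, (∑ α, ((if α = β then (1:ℂ) else 0) - (if α = β' then 1 else 0)) * X α i)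
          * X⁻¹ i β) = 0 := by
        rw [Finset.sum_congr rfl fun i _ => by rw [hv i, zero_mul]]
        exact Finset.sum_const_zero
      have h2 : (∑ i, (∑ α, ((if α = β then (1:ℂ) else 0) - (if α = β' then 1 else 0)) * X α i)
          * X⁻¹ i β)
          = ((if β = β then (1:ℂ) else 0) - (if β = β' then 1 else 0)) := by
        have e : ∀ i, (∑ α, ((if α = β then (1:ℂ) else 0) - (if α = β' then 1 else 0)) * X α i)
            * X⁻¹ i β
            = ∑ α, ((if α = β then (1:ℂ) else 0) - (if α = β' then 1 else 0))
                * (X α i * X⁻¹ i β) := by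
          intro i
          rw [Finset.sum_mul]
          exact Finset.sum_congr rfl fun α _ => by ring
        rw [Finset.sum_congr rfl fun i _ => e i, Finset.sum_comm]
        have e2 : ∀ α, (∑ i, ((if α = β then (1:ℂ) else 0) - (if α = β' then 1 else 0))
              * (X α i * X⁻¹ i β))
            = if α = β then ((if α = β then (1:ℂ) else 0) - (if α = β' then 1 else 0)) else 0 := by
          intro α
          rw [← Finset.mul_sum]
          have h3 : (∑ i, X α i * X⁻¹ i β) = if α = β then 1 else 0 := by
            calc (∑ i, X α i * X⁻¹ i β) = (X * X⁻¹) α β := (Matrix.mul_apply).symm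
              _ = (1 : Matrix (Fin m) (Fin m) ℂ) α β := by
                  rw [Matrix.mul_nonsing_inv X hdet]
              _ = if α = β then 1 else 0 := Matrix.one_apply
          rw [h3]
          split_ifs <;> ring
        rw [Finset.sum_congr rfl fun α _ => e2 α]
        simpa using Finset.sum_ite_eq' Finset.univ β
          (fun α => ((if α = β then (1:ℂ) else 0) - (if α = β' then 1 else 0)))
      rw [← h2]
      exact h1
    rw [if_pos rfl, if_neg hne] at hzero
    norm_num at hzero
  -- σ is strictly monotone
  have hmono : ∀ a b : Fin m, a < b → σ a < σ b := by
    intro a b hab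
    have h := Bil_inv X hm hstab hrow (eb a) (eb b)
    rw [Bil_eb, Ya_eb, Ya_eb] at h
    have hXa : (fun j => X a j) = eb (σ a) := by
      funext j
      rw [hval a j]
      rfl
    have hXb : (fun j => X b j) = eb (σ b) := by
      funext j
      rw [hval b j]
      rfl
    rw [hXa, hXb, Bil_eb, av_eb, av_eb] at h
    have hab' : mcol a b = 1 := by
      rw [mcol, if_pos hab, if_neg (ne_of_lt hab)]
      norm_num
    rw [hab'] at h
    rcases lt_trichotomy (σ a) (σ b) with h2 | h2 | h2
    · exact h2
    · rw [h2, mcol_self] at h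
      norm_num at h
    · rw [mcol_lt (σ a) (σ b) h2] at h
      norm_num at h
  -- σ = id
  have hbij : Function.Bijective σ := (Finite.injective_iff_bijective).mp hinj
  have hle : ∀ a : Fin m, a.val ≤ (σ a).val := by
    have hg : StrictMono (fun n => if h : n < m then (σ ⟨n, h⟩).val else n) := by
      intro a b hab
      by_cases ha : a < m
      · by_cases hb : b < m
        · simp only [dif_pos ha, dif_pos hb]
          exact hmono ⟨a, ha⟩ ⟨b, hb⟩ (Fin.mk_lt_mk.mpr hab)
        · simp only [dif_pos ha, dif_neg hb]
          exact lt_of_lt_of_le (σ ⟨a, ha⟩).isLt (le_of_not_gt hb)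
      · have hb : ¬ b < m := fun h => ha (lt_trans hab h)
        simp only [dif_neg ha, dif_neg hb]
        exact hab
    intro a
    have h : a.val ≤ (if h : a.val < m then (σ ⟨a.val, h⟩).val else a.val) := hg.le_apply
    rw [dif_pos a.isLt] at h
    simpa using h
  have hsum : (∑ a : Fin m, a.val) = ∑ a : Fin m, (σ a).val :=
    (Function.Bijective.sum_comp hbij (fun x => x.val)).symm
  have hid : ∀ a : Fin m, σ a = a := by
    have h := (Finset.sum_eq_sum_iff_of_le (fun i (_ : i ∈ Finset.univ) => hle i)).mp hsum
    intro a
    exact Fin.ext (h a (Finset.mem_univ a)).symm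
  -- conclude
  ext β i
  rw [hval β i, hid β, Matrix.one_apply]
  by_cases h : i = β
  · rw [if_pos h, if_pos h.symm]
  · rw [if_neg h, if_neg (fun hh => h hh.symm)]

lemma final_step (X : Matrix (Fin m) (Fin m) ℂ) (hm : 0 < m) (hX : IsUnit X)
    (hstab : congrAct3 (caxis m) X = caxis m) :
    ∃ η : ℂ, η ^ 3 = 1 ∧ X = η • (1 : Matrix (Fin m) (Fin m) ℂ) := by
  have hcube : ∀ u, sv (Ya X u) ^ 3 = sv u ^ 3 := by
    intro u
    have h := LH X hstab u u u
    rw [L_cube, L_cube] at h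
    linear_combination 6 * h
  set i0 : Fin m := ⟨0, hm⟩ with hi0
  set ω : ℂ := sv (Ya X (eb i0)) with hωdef
  have hω : ω ^ 3 = 1 := by
    have h := hcube (eb i0)
    rw [sv_eb, one_pow] at h
    exact h
  have hYlin : ∀ (u : Fin m → ℂ) (t : ℂ) (j : Fin m),
      Ya X (fun α => u α + t * eb i0 α) j = Ya X u j + t * Ya X (eb i0) j := by
    intro u t j
    show (∑ α, (u α + t * eb i0 α) * X α j) = _
    calc (∑ α, (u α + t * eb i0 α) * X α j)
        = ∑ α, (u α * X α j + t * (eb i0 α * X α j)) :=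
          Finset.sum_congr rfl fun α _ => by ring
      _ = (∑ α, u α * X α j) + ∑ α, t * (eb i0 α * X α j) := Finset.sum_add_distrib
      _ = Ya X u j + t * ∑ α, eb i0 α * X α j := by rw [← Finset.mul_sum]; rfl
      _ = Ya X u j + t * Ya X (eb i0) j := rfl
  have hlin : ∀ (u : Fin m → ℂ) (t : ℂ),
      sv (Ya X (fun α => u α + t * eb i0 α)) = sv (Ya X u) + t * ω := by
    intro u t
    show (∑ j, Ya X (fun α => u α + t * eb i0 α) j) = _
    calc (∑ j, Ya X (fun α => u α + t * eb i0 α) j)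
        = ∑ j, (Ya X u j + t * Ya X (eb i0) j) :=
          Finset.sum_congr rfl fun j _ => hYlin u t j
      _ = (∑ j, Ya X u j) + ∑ j, t * Ya X (eb i0) j := Finset.sum_add_distrib
      _ = sv (Ya X u) + t * ω := by rw [← Finset.mul_sum]; rfl
  have hsvlin : ∀ (u : Fin m → ℂ) (t : ℂ), sv (fun α => u α + t * eb i0 α) = sv u + t := by
    intro u t
    show (∑ α, (u α + t * eb i0 α)) = _
    calc (∑ α, (u α + t * eb i0 α))
        = (∑ α, u α) + ∑ α, t * eb i0 α := Finset.sum_add_distrib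
      _ = sv u + t * sv (eb i0) := by rw [← Finset.mul_sum]; rfl
      _ = sv u + t := by rw [sv_eb, mul_one]
  have homog : ∀ u, sv (Ya X u) = ω * sv u := by
    intro u
    have h0 := hcube u
    have h1 := hcube (fun α => u α + 1 * eb i0 α)
    have h2 := hcube (fun α => u α + (-1) * eb i0 α)
    rw [hlin u 1, hsvlin u 1] at h1
    rw [hlin u (-1), hsvlin u (-1)] at h2
    linear_combination (ω/6) * h1 + (ω/6) * h2 - (ω/3) * h0 - (sv (Ya X u)) * hω
  have hω0 : ω ≠ 0 := by
    intro h
    rw [h] at hω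
    norm_num at hω
  set X' : Matrix (Fin m) (Fin m) ℂ := (ω^2) • X with hX'
  have hω6 : (ω^2)^3 = 1 := by
    calc (ω^2)^3 = (ω^3)^2 := by ring
      _ = 1 := by rw [hω]; norm_num
  have happ : ∀ α i, X' α i = ω^2 * X α i := by
    intro α i
    rw [hX']
    simp [Matrix.smul_apply, smul_eq_mul]
  have hstab' : congrAct3 (caxis m) X' = caxis m := by
    funext α β γ
    show (∑ i, ∑ j, ∑ k, caxis m i j k * X' α i * X' β j * X' γ k) = _
    have e : ∀ i j k, caxis m i j k * X' α i * X' β j * X' γ k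
        = caxis m i j k * X α i * X β j * X γ k := by
      intro i j k
      rw [happ, happ, happ]
      linear_combination (caxis m i j k * X α i * X β j * X γ k) * hω6
    calc (∑ i, ∑ j, ∑ k, caxis m i j k * X' α i * X' β j * X' γ k)
        = ∑ i, ∑ j, ∑ k, caxis m i j k * X α i * X β j * X γ k :=
          Finset.sum_congr rfl fun i _ => Finset.sum_congr rfl fun j _ =>
            Finset.sum_congr rfl fun k _ => e i j k
      _ = congrAct3 (caxis m) X α β γ := rfl
      _ = caxis m α β γ := by rw [hstab]
  have hXunit' : IsUnit X' := by
    rw [Matrix.isUnit_iff_isUnit_det, hX', Matrix.det_smul]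
    have hdX : X.det ≠ 0 := by
      have h := (Matrix.isUnit_iff_isUnit_det X).mp hX
      exact isUnit_iff_ne_zero.mp h
    exact isUnit_iff_ne_zero.mpr
      (mul_ne_zero (pow_ne_zero _ (pow_ne_zero _ hω0)) hdX)
  have hrow' : ∀ α, ∑ i, X' α i = 1 := by
    intro α
    have h1 : (∑ i, X α i) = ω := by
      have h2 := homog (eb α)
      rw [sv_eb, mul_one] at h2
      have h3 : sv (Ya X (eb α)) = ∑ i, X α i := by
        rw [Ya_eb]
        rfl
      rw [h3] at h2
      exact h2
    calc (∑ i, X' α i) = ∑ i, ω^2 * X α i := Finset.sum_congr rfl fun i _ => happ α i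
      _ = ω^2 * ∑ i, X α i := by rw [Finset.mul_sum]
      _ = ω^2 * ω := by rw [h1]
      _ = 1 := by linear_combination hω
  have hX1 : X' = 1 := Lmain X' hm hXunit' hstab' hrow'
  refine ⟨ω, hω, ?_⟩
  have h : X = ω • X' := by
    rw [hX', smul_smul, show ω * ω^2 = 1 from by linear_combination hω, one_smul]
  rw [h, hX1]

end AxisStab

/-- The stabilizer of the axis core tensor under the congruence action by
`GL(m,ℂ)` is trivial: any invertible stabilizing matrix is `ηI` with `η³ = 1`. -/
theorem axis_stabilizer_trivial_complex (m : ℕ) (X : Matrix (Fin m) (Fin m) ℂ)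
    (hX : IsUnit X) (hstab : congrAct3 (caxis m) X = caxis m) :
    ∃ η : ℂ, η ^ 3 = 1 ∧ X = η • (1 : Matrix (Fin m) (Fin m) ℂ) := by
  rcases Nat.eq_zero_or_pos m with hm | hm
  · subst hm
    exact ⟨1, one_pow 3, by ext β i; exact β.elim0⟩
  · exact AxisStab.final_step X hm hX hstab
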